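/- arXiv:math/0411273 — 6 statements merged into one kernel-verified Lean document; each statement's English description precedes it below -/
import Mathlib

section
/- For every nonzero signal f in ℂ^N, the sum of the size of the support of f and the size of the support of its discrete Fourier transform f̂ is at least 2√N. -/
open scoped Classical

/-- The unitary discrete Fourier transform on `ℂ^N`. -/
noncomputable def dft (N : ℕ) [NeZero N] (f : ZMod N → ℂ) : ZMod N → ℂ :=
  fun ω => (1 / Real.sqrt N : ℂ) *
    ∑ t : ZMod N, f t *
      Complex.exp (-(2 * Real.pi * Complex.I * (ω.val : ℂ) * (t.val : ℂ)) / N)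

/-- The support of a finite signal, as a finset. -/
noncomputable def dsupp (N : ℕ) [NeZero N] (f : ZMod N → ℂ) : Finset (ZMod N) :=
  Finset.univ.filter (fun t => f t ≠ 0)

/-!
If `|f|` attains its maximum `M > 0` at `t₀`, the triangle inequality gives `|𝓕 f| ≤ |supp f| · M`
everywhere, and applying it once more to `𝓕 (𝓕 f) = N • f (-·)` at `-t₀` gives
`N · M ≤ |supp 𝓕 f| · |supp f| · M`. Hence `|supp f| · |supp f̂| ≥ N`, and AM–GM finishes.
-/

open scoped ZMod

lemma two_mul_sqrt_le_add {x a b : ℝ} (ha : 0 ≤ a) (hb : 0 ≤ b) (h : x ≤ a * b) :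
    2 * √x ≤ a + b := by
  rw [← Real.sqrt_sq (by positivity : 0 ≤ a + b), ← Real.sqrt_sq zero_le_two,
    ← Real.sqrt_mul (sq_nonneg _)]
  gcongr
  nlinarith [four_mul_le_sq_add a b]

section

variable {N : ℕ} [NeZero N]

lemma dft_eq_smul_zmod_dft (f : ZMod N → ℂ) : dft N f = (1 / Real.sqrt N : ℂ) • 𝓕 f := by
  ext ω
  simp only [dft, Pi.smul_apply, smul_eq_mul, ZMod.dft_apply]
  congr 1
  refine Finset.sum_congr rfl fun t _ => ?_
  have hcast : -(t * ω) = ((-(t.val * ω.val) : ℤ) : ZMod N) := by simp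
  rw [mul_comm, hcast, ZMod.stdAddChar_coe]
  congr 2
  push_cast
  ring

lemma dsupp_dft (f : ZMod N → ℂ) : dsupp N (dft N f) = dsupp N (𝓕 f) := by
  simp [dsupp, dft_eq_smul_zmod_dft, NeZero.ne N]

lemma norm_zmod_dft_le (g : ZMod N → ℂ) {C : ℝ} (hC : ∀ t, ‖g t‖ ≤ C) (ω : ZMod N) :
    ‖𝓕 g ω‖ ≤ (dsupp N g).card * C := by
  rw [ZMod.dft_apply, ← Finset.sum_filter_of_ne fun t _ h => right_ne_zero_of_smul h]
  calc ‖∑ t ∈ dsupp N g, ZMod.stdAddChar (-(t * ω)) • g t‖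
      ≤ ∑ t ∈ dsupp N g, ‖g t‖ := by
        refine (norm_sum_le _ _).trans_eq (Finset.sum_congr rfl fun t _ => ?_)
        rw [norm_smul, ZMod.stdAddChar_apply, Circle.norm_coe, one_mul]
    _ ≤ (dsupp N g).card * C := by
        simpa using Finset.sum_le_card_nsmul _ _ C fun t _ => hC t

lemma le_card_dsupp_mul_card_dsupp_dft (f : ZMod N → ℂ) (hf : f ≠ 0) :
    (N : ℝ) ≤ (dsupp N f).card * (dsupp N (𝓕 f)).card := by
  obtain ⟨t₀, -, ht₀⟩ := Finset.exists_max_image Finset.univ (‖f ·‖) Finset.univ_nonempty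
  have hpos : 0 < ‖f t₀‖ := by
    obtain ⟨s, hs⟩ := Function.ne_iff.mp hf
    exact (norm_pos_iff.mpr hs).trans_le (ht₀ s (Finset.mem_univ s))
  have hbound := norm_zmod_dft_le f fun t => ht₀ t (Finset.mem_univ t)
  have : (N : ℝ) * ‖f t₀‖ ≤ (dsupp N (𝓕 f)).card * ((dsupp N f).card * ‖f t₀‖) := by
    calc (N : ℝ) * ‖f t₀‖ = ‖𝓕 (𝓕 f) (-t₀)‖ := by simp [ZMod.dft_dft]
      _ ≤ _ := norm_zmod_dft_le _ hbound _
  exact le_of_mul_le_mul_right (this.trans_eq (by ring)) hpos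

end

/-- Donoho–Stark: `|supp f| + |supp f̂| ≥ 2√N` for every nonzero `f : ℂ^N`. -/
theorem stmt_0 (N : ℕ) [NeZero N] (f : ZMod N → ℂ) (hf : f ≠ 0) :
    2 * Real.sqrt N ≤ (dsupp N f).card + (dsupp N (dft N f)).card := by
  rw [dsupp_dft]
  exact two_mul_sqrt_le_add (Nat.cast_nonneg _) (Nat.cast_nonneg _)
    (le_card_dsupp_mul_card_dsupp_dft f hf)
end

section
/- If N is prime, then every nonzero signal f in ℂ^N satisfies |supp f| + |supp f̂| > N. -/
open scoped Classical

section Aux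

open Polynomial


theorem prod_X_sub_C_dvd' {A : Type*} [CommRing A] [IsDomain A] {β : Type*} (s : Finset β)
    (z : β → A) (hinj : Set.InjOn z s) (g : A[X]) (h : ∀ b ∈ s, g.eval (z b) = 0) :
    (∏ b ∈ s, (X - C (z b))) ∣ g := by
  classical
  induction s using Finset.induction_on generalizing g with
  | empty => simp
  | @insert a s ha ih =>
    have hroot : g.eval (z a) = 0 := h a (Finset.mem_insert_self a s)
    obtain ⟨q, hq⟩ := (dvd_iff_isRoot.2 hroot : (X - C (z a)) ∣ g)
    have hqroots : ∀ b ∈ s, q.eval (z b) = 0 := by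
      intro b hb
      have hb' := h b (Finset.mem_insert_of_mem hb)
      rw [hq, eval_mul, eval_sub, eval_X, eval_C] at hb'
      have hne : z b - z a ≠ 0 := by
        refine sub_ne_zero.2 fun hzz => ha ?_
        have := hinj (Finset.mem_insert_of_mem hb) (Finset.mem_insert_self a s) hzz
        rwa [this] at hb
      exact (mul_eq_zero.1 hb').resolve_left hne
    have := ih (fun x hx y hy => hinj (Finset.mem_insert_of_mem hx) (Finset.mem_insert_of_mem hy))
      q hqroots
    rw [Finset.prod_insert ha, hq]
    exact mul_dvd_mul_left _ this

theorem sparse_vanish {S : Type*} [CommRing S] {p : ℕ} (hp : p.Prime) (hS : (p : S) = 0) :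
    ∀ (k : ℕ) (G : S[X]), (∀ i ∈ G.support, i < p) → G.support.card ≤ k →
      (X - 1) ^ k ∣ G → G = 0 := by
  classical
  intro k
  induction k with
  | zero =>
    intro G _ hcard _
    exact support_eq_empty.1 (Finset.card_eq_zero.1 (Nat.le_zero.1 hcard))
  | succ k ih =>
    intro G hdeg hcard hdvd
    by_cases hG : G = 0
    · exact hG
    exfalso
    set d := G.natDegree with hd
    have hdmem : d ∈ G.support := natDegree_mem_support_of_nonzero hG
    set H : S[X] := C (d : S) * G - X * derivative G with hH
    have hcoeff : ∀ i, H.coeff i = ((d : S) - (i : S)) * G.coeff i := by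
      intro i
      cases i with
      | zero => simp [hH, coeff_C_mul, mul_comm]
      | succ n =>
        simp only [hH, coeff_sub, coeff_C_mul, coeff_X_mul, coeff_derivative]
        push_cast
        ring
    have hHsupp : H.support ⊆ G.support.erase d := by
      intro i hi
      rw [mem_support_iff, hcoeff i] at hi
      rw [Finset.mem_erase, mem_support_iff]
      constructor
      · rintro rfl; exact hi (by ring)
      · intro h0; exact hi (by rw [h0, mul_zero])
    have hHdvd : (X - 1) ^ k ∣ H := by
      obtain ⟨q, hq⟩ := hdvd
      have h1 : (X - 1 : S[X]) ^ k ∣ G := by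
        rw [hq, pow_succ]; exact Dvd.dvd.mul_right (dvd_mul_right _ _) q
      have h2 : (X - 1 : S[X]) ^ k ∣ derivative G := by
        rw [hq, derivative_mul, derivative_pow, Nat.succ_sub_one]
        refine dvd_add (Dvd.dvd.mul_right (Dvd.dvd.mul_right (dvd_mul_left _ _) _) _) ?_
        exact Dvd.dvd.mul_right (pow_dvd_pow _ (Nat.le_succ k)) _
      exact dvd_sub (Dvd.dvd.mul_left h1 _) (Dvd.dvd.mul_left h2 _)
    have hHzero : H = 0 := by
      refine ih H (fun i hi => hdeg i (Finset.mem_of_mem_erase (hHsupp hi))) ?_ hHdvd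
      calc H.support.card ≤ (G.support.erase d).card := Finset.card_le_card hHsupp
        _ = G.support.card - 1 := Finset.card_erase_of_mem hdmem
        _ ≤ k := by omega
    -- coefficients away from d vanish
    have hvanish : ∀ i ∈ G.support, i ≠ d → G.coeff i = 0 := by
      intro i hi hne
      have h0 : ((d : S) - (i : S)) * G.coeff i = 0 := by
        rw [← hcoeff i, hHzero, coeff_zero]
      have hid : i < p := hdeg i hi
      have hdp : d < p := hdeg d hdmem
      have hpz : Prime ((p : ℤ)) := Nat.prime_iff_prime_int.mp hp
      have hndvd : ¬ ((p : ℤ) ∣ (d : ℤ) - (i : ℤ)) := by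
        intro hdvd'
        have hne0 : ((d : ℤ) - (i : ℤ)) ≠ 0 := by
          intro h0
          apply hne
          omega
        have := Int.le_of_dvd (abs_pos.2 hne0) ((dvd_abs _ _).2 hdvd')
        have habs : |((d : ℤ) - (i : ℤ))| < p := by
          rw [abs_sub_lt_iff]
          omega
        omega
      have hcop : IsCoprime ((d : ℤ) - (i : ℤ)) (p : ℤ) :=
        ((Prime.coprime_iff_not_dvd hpz).2 hndvd).symm
      obtain ⟨u, v, huv⟩ := hcop
      have : (1 : S) = (u : S) * ((d : S) - (i : S)) := by
        have := congrArg (fun z : ℤ => (z : S)) huv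
        push_cast at this
        rw [hS] at this
        rw [← this]; ring
      calc G.coeff i = 1 * G.coeff i := (one_mul _).symm
        _ = (u : S) * (((d : S) - (i : S)) * G.coeff i) := by rw [this]; ring
        _ = 0 := by rw [h0, mul_zero]
    -- eval at 1
    have heval : G.eval 1 = 0 := by
      obtain ⟨q, hq⟩ := hdvd
      rw [hq, eval_mul, eval_pow, eval_sub, eval_X, eval_one, sub_self, zero_pow (Nat.succ_ne_zero k), zero_mul]
    have heval' : G.eval 1 = G.coeff d := by
      rw [eval_eq_sum, Polynomial.sum]
      rw [Finset.sum_eq_single d]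
      · simp
      · intro i hi hne; rw [hvanish i hi hne, zero_mul]
      · intro hnd; exact absurd hdmem hnd
    rw [heval] at heval'
    exact (mem_support_iff.1 hdmem) heval'.symm

noncomputable def Rsub (ζ : ℂ) : Subalgebra ℤ ℂ := Algebra.adjoin ℤ {ζ}

noncomputable def zr (ζ : ℂ) : Rsub ζ := ⟨ζ, Algebra.subset_adjoin rfl⟩

theorem zr_coe (ζ : ℂ) : ((zr ζ : Rsub ζ) : ℂ) = ζ := rfl

theorem zr_pow_p {p : ℕ} {ζ : ℂ} (hζ : IsPrimitiveRoot ζ p) : (zr ζ) ^ p = 1 := by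
  apply Subtype.ext
  push_cast [zr_coe]
  exact hζ.pow_eq_one

theorem pi_dvd_sub {p : ℕ} {ζ : ℂ} (m : ℕ) :
    (1 - zr ζ) ∣ (1 - (zr ζ) ^ m) := by
  simpa using sub_dvd_pow_sub_pow (1 : Rsub ζ) (zr ζ) m

instance Rsub.isDomain (ζ : ℂ) : IsDomain (Rsub ζ) :=
  Function.Injective.isDomain (Subalgebra.val (Rsub ζ)).toRingHom Subtype.coe_injective

theorem pi_dvd_p {p : ℕ} {ζ : ℂ} (hp : p.Prime) (hζ : IsPrimitiveRoot ζ p) :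
    (1 - zr ζ) ∣ (p : Rsub ζ) := by
  have hne1 : (zr ζ) ≠ 1 := by
    intro h
    exact hζ.ne_one hp.one_lt (by simpa [zr_coe] using congrArg Subtype.val h)
  set G : (Rsub ζ)[X] := ∑ i ∈ Finset.range p, X ^ i with hG
  have hroot : G.eval (zr ζ) = 0 := by
    have h1 : G.eval (zr ζ) * ((zr ζ) - 1) = (zr ζ) ^ p - 1 := by
      rw [hG]
      simp only [eval_finset_sum, eval_pow, eval_X]
      exact geom_sum_mul (zr ζ) p
    rw [zr_pow_p hζ, sub_self] at h1
    rcases mul_eq_zero.1 h1 with h | h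
    · exact h
    · exact absurd (sub_eq_zero.1 h) hne1
  obtain ⟨H, hH⟩ := dvd_iff_isRoot.2 hroot
  have := congrArg (Polynomial.eval (1 : Rsub ζ)) hH
  simp only [hG, eval_finset_sum, eval_pow, eval_one, eval_mul, eval_sub, eval_X, eval_C,
    Finset.sum_const, Finset.card_range, nsmul_eq_mul, mul_one, one_pow] at this
  exact ⟨H.eval 1, this⟩

theorem pi_not_unit {p : ℕ} {ζ : ℂ} (hp : p.Prime) (hζ : IsPrimitiveRoot ζ p) :
    ¬ IsUnit (1 - zr ζ) := by
  haveI : Fact p.Prime := ⟨hp⟩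
  intro hu
  obtain ⟨u, hu'⟩ := hu.exists_right_inv
  have hmem : (u : ℂ) ∈ Algebra.adjoin ℤ ({ζ} : Set ℂ) := u.2
  rw [Algebra.adjoin_singleton_eq_range_aeval] at hmem
  obtain ⟨U, hU⟩ := hmem
  set Q : ℤ[X] := (1 - X) * U - 1 with hQ
  have haev : Polynomial.aeval ζ Q = 0 := by
    have h1 : ((1 - zr ζ) * u : Rsub ζ) = 1 := hu'
    have h2 : (1 - ζ) * (u : ℂ) = 1 := by
      have := congrArg Subtype.val h1
      push_cast [zr_coe] at this
      simpa using this
    rw [hQ]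
    simp only [map_sub, map_mul, map_one, Polynomial.aeval_X]
    have hU' : (Polynomial.aeval ζ) U = (u : ℂ) := hU
    rw [hU', h2]
    ring
  have hint : IsIntegral ℤ ζ := hζ.isIntegral hp.pos
  have hdvd := minpoly.isIntegrallyClosed_dvd hint haev
  rw [← Polynomial.cyclotomic_eq_minpoly hζ hp.pos] at hdvd
  obtain ⟨T, hT⟩ := hdvd
  have hev := congrArg (Polynomial.eval (1 : ℤ)) hT
  rw [hQ] at hev
  simp only [eval_mul, eval_sub, eval_one, eval_X, Polynomial.eval_one_cyclotomic_prime,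
    sub_self, zero_mul, zero_sub] at hev
  have hple : (p : ℤ) ≤ 1 := by
    refine Int.le_of_dvd one_pos ⟨-T.eval 1, ?_⟩
    linarith
  have := hp.one_lt
  omega
theorem key_coeff {R : Type*} [CommRing R] [IsDomain R] {p : ℕ} [NeZero p] (hp : p.Prime)
    (z : R) (hzinj : ∀ i j : ℕ, i < p → j < p → z ^ i = z ^ j → i = j)
    (hpd : (1 - z) ∣ (p : R))
    (g : R[X]) (hsupp : ∀ i ∈ g.support, i < p) (B : Finset (ZMod p))
    (hcard : g.support.card ≤ B.card)
    (hroots : ∀ b ∈ B, g.eval (z ^ (b : ZMod p).val) = 0) :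
    ∀ i, (1 - z) ∣ g.coeff i := by
  classical
  have hinj : Set.InjOn (fun b : ZMod p => z ^ b.val) B := by
    intro x _ y _ hxy
    exact ZMod.val_injective p (hzinj _ _ (ZMod.val_lt x) (ZMod.val_lt y) hxy)
  have hdvd := prod_X_sub_C_dvd' B _ hinj g hroots
  set I : Ideal R := Ideal.span {1 - z} with hI
  set φ := Ideal.Quotient.mk I with hφ
  have hpS : ((p : ℕ) : R ⧸ I) = 0 := by
    obtain ⟨h, hh⟩ := hpd
    have h0 : φ (1 - z) = 0 := Ideal.Quotient.eq_zero_iff_mem.2 (Ideal.subset_span rfl)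
    have : φ ((p : ℕ) : R) = 0 := by rw [hh, map_mul, h0, zero_mul]
    simpa using this
  have hmap : (X - 1 : (R ⧸ I)[X]) ^ B.card ∣ g.map φ := by
    have hd2 := Polynomial.map_dvd φ hdvd
    rw [Polynomial.map_prod] at hd2
    have heq : ∀ b ∈ B, (Polynomial.map φ (X - C (z ^ (b : ZMod p).val))) = X - 1 := by
      intro b _
      rw [Polynomial.map_sub, Polynomial.map_X, Polynomial.map_C]
      have : φ (z ^ (b : ZMod p).val) = 1 := by
        rw [show (1 : R ⧸ I) = φ 1 from rfl, hφ, Ideal.Quotient.mk_eq_mk_iff_sub_mem]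
        rw [hI, Ideal.mem_span_singleton]
        have := sub_dvd_pow_sub_pow (1 : R) z ((b : ZMod p).val)
        simp only [one_pow] at this
        exact dvd_sub_comm.mp this
      rw [this, map_one]
    rwa [Finset.prod_congr rfl heq, Finset.prod_const] at hd2
  have hz0 : g.map φ = 0 := by
    refine sparse_vanish hp hpS B.card (g.map φ) ?_ ?_ hmap
    · intro i hi
      exact hsupp i (Polynomial.support_map_subset φ g hi)
    · exact le_trans (Finset.card_le_card (Polynomial.support_map_subset φ g)) hcard
  intro i
  have : φ (g.coeff i) = 0 := by
    rw [← Polynomial.coeff_map, hz0, Polynomial.coeff_zero]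
  rw [← Ideal.mem_span_singleton, ← hI]
  exact Ideal.Quotient.eq_zero_iff_mem.1 this
theorem cheb_det {R : Type*} [CommRing R] [IsDomain R] [IsNoetherianRing R] {p : ℕ} [NeZero p]
    (hp : p.Prime) (z : R) (hzinj : ∀ i j : ℕ, i < p → j < p → z ^ i = z ^ j → i = j)
    (hpd : (1 - z) ∣ (p : R)) (hznu : ¬ IsUnit (1 - z)) (hzne : (1 : R) - z ≠ 0)
    {n : Type*} [Fintype n] [DecidableEq n] (a b : n → ZMod p)
    (ha : Function.Injective a) (hb : Function.Injective b) :
    (Matrix.of fun i j : n => z ^ ((a i).val * (b j).val)).det ≠ 0 := by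
  classical
  intro hdet
  obtain ⟨v, hv0, hvk⟩ := (Matrix.exists_mulVec_eq_zero_iff).2 hdet
  set M : Matrix n n R := Matrix.of fun i j : n => z ^ ((a i).val * (b j).val) with hM
  have hbinj : Function.Injective (fun j : n => (b j).val) :=
    fun x y hxy => hb (ZMod.val_injective p hxy)
  have claim : ∀ (m : ℕ) (w : n → R), M.mulVec w = 0 → ∀ j, (1 - z) ^ m ∣ w j := by
    intro m
    induction m with
    | zero => intro w _ j; simpa using one_dvd _
    | succ m ih =>
      intro w hw j
      set g : R[X] := ∑ j' : n, C (w j') * X ^ ((b j').val) with hg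
      have hgc : ∀ j', g.coeff ((b j').val) = w j' := by
        intro j'
        rw [hg, finset_sum_coeff]
        rw [Finset.sum_eq_single j']
        · simp
        · intro j'' _ hne
          rw [coeff_C_mul, coeff_X_pow, if_neg (fun h => hne (hbinj h.symm)), mul_zero]
        · intro h; exact absurd (Finset.mem_univ j') h
      have hgsupp : g.support ⊆ Finset.image (fun j' : n => (b j').val) Finset.univ := by
        intro i hi
        by_contra hni
        apply mem_support_iff.1 hi
        rw [hg, finset_sum_coeff]
        refine Finset.sum_eq_zero fun j'' _ => ?_
        rw [coeff_C_mul, coeff_X_pow, if_neg, mul_zero]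
        intro h
        exact hni (Finset.mem_image.2 ⟨j'', Finset.mem_univ _, h.symm⟩)
      have hroots : ∀ c ∈ Finset.image a Finset.univ, g.eval (z ^ (c : ZMod p).val) = 0 := by
        intro c hc
        obtain ⟨i, _, rfl⟩ := Finset.mem_image.1 hc
        have hmv : M.mulVec w i = 0 := congrFun hw i
        rw [Matrix.mulVec, dotProduct] at hmv
        rw [hg, eval_finset_sum, ← hmv]
        refine Finset.sum_congr rfl fun j'' _ => ?_
        rw [eval_mul, eval_C, eval_pow, eval_X, ← pow_mul, hM]
        simp [mul_comm]
      have hdiv := key_coeff hp z hzinj hpd g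
        (fun i hi => by
          obtain ⟨j'', _, rfl⟩ := Finset.mem_image.1 (hgsupp hi)
          exact ZMod.val_lt _)
        (Finset.image a Finset.univ)
        (le_trans (Finset.card_le_card hgsupp)
          (by rw [Finset.card_image_of_injective _ ha]
              exact Finset.card_image_le.trans le_rfl))
        hroots
      have hdivw : ∀ j', (1 - z) ∣ w j' := fun j' => hgc j' ▸ hdiv ((b j').val)
      choose u hu using hdivw
      have hmu : M.mulVec u = 0 := by
        funext i
        have h1 : M.mulVec w i = (1 - z) * M.mulVec u i := by
          rw [Matrix.mulVec, Matrix.mulVec, dotProduct, dotProduct, Finset.mul_sum]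
          refine Finset.sum_congr rfl fun j'' _ => ?_
          rw [hu j'']; ring
        have h2 : M.mulVec w i = 0 := congrFun hw i
        rw [h2] at h1
        rcases mul_eq_zero.1 h1.symm with h | h
        · exact absurd h hzne
        · exact h
      rw [hu j, pow_succ, mul_comm ((1-z)^m) (1-z)]
      exact mul_dvd_mul_left _ (ih u hmu j)
  have hIbot : (⨅ m : ℕ, (Ideal.span {1 - z} : Ideal R) ^ m) = ⊥ :=
    Ideal.iInf_pow_eq_bot_of_isDomain (I := Ideal.span {1 - z})
      (fun h => hznu (Ideal.span_singleton_eq_top.1 h))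
  apply hv0
  funext j
  have hmem : v j ∈ (⨅ m : ℕ, (Ideal.span {1 - z} : Ideal R) ^ m) := by
    rw [Ideal.mem_iInf]
    intro m
    rw [Ideal.span_singleton_pow, Ideal.mem_span_singleton]
    exact claim m v hvk j
  rw [hIbot] at hmem
  simpa using hmem

end Aux

open Polynomial in
set_option maxHeartbeats 1000000 in
/-- Tao's uncertainty principle: for `N` prime and `f ≠ 0`,
`|supp f| + |supp f̂| > N`. -/
theorem stmt_3 (N : ℕ) (hN : N.Prime) [NeZero N] (f : ZMod N → ℂ) (hf : f ≠ 0) :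
    N < (dsupp N f).card + (dsupp N (dft N f)).card := by
  classical
  by_contra hcon
  push_neg at hcon
  set T := dsupp N f with hT
  set S := dsupp N (dft N f) with hS
  -- the primitive root
  set ζ0 : ℂ := Complex.exp (2 * Real.pi * Complex.I / N) with hζ0def
  have hζ0 : IsPrimitiveRoot ζ0 N := Complex.isPrimitiveRoot_exp N (NeZero.ne N)
  set ζ : ℂ := ζ0⁻¹ with hζdef
  have hζ : IsPrimitiveRoot ζ N := hζ0.inv
  have hexp : ∀ m k : ℕ,
      Complex.exp (-(2 * Real.pi * Complex.I * (m : ℂ) * (k : ℂ)) / N) = ζ ^ (m * k) := by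
    intro m k
    rw [hζdef, hζ0def, ← Complex.exp_neg, ← Complex.exp_nat_mul]
    congr 1
    push_cast
    ring
  -- T is nonempty
  have hTne : T.Nonempty := by
    obtain ⟨x, hx⟩ := Function.ne_iff.1 hf
    exact ⟨x, Finset.mem_filter.2 ⟨Finset.mem_univ _, hx⟩⟩
  -- choose frequency set
  have hcard' : T.card ≤ Sᶜ.card := by
    rw [Finset.card_compl, ZMod.card]
    have h1 : S.card ≤ N := le_trans (Finset.card_le_card (Finset.filter_subset _ _)) (by
      rw [Finset.card_univ, ZMod.card])
    omega
  obtain ⟨Xs, hXsub, hXcard⟩ := Finset.exists_subset_card_eq hcard'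
  have e : (Xs : Finset (ZMod N)) ≃ (T : Finset (ZMod N)) := Finset.equivOfCardEq hXcard
  set a : Xs → ZMod N := fun i => ↑i with ha
  set b : Xs → ZMod N := fun j => ↑(e j) with hb
  have hainj : Function.Injective a := Subtype.coe_injective
  have hbinj : Function.Injective b := fun x y h => e.injective (Subtype.coe_injective h)
  set Mc : Matrix Xs Xs ℂ := Matrix.of fun i j => ζ ^ ((a i).val * (b j).val) with hMc
  set v : Xs → ℂ := fun j => f (b j) with hv
  have hvne : v ≠ 0 := by
    obtain ⟨x0, hx0⟩ := hTne
    intro h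
    have := congrFun h (e.symm ⟨x0, hx0⟩)
    simp only [hv, hb, Equiv.apply_symm_apply, Pi.zero_apply] at this
    exact (Finset.mem_filter.1 hx0).2 this
  have hker : Mc.mulVec v = 0 := by
    funext i
    have hiS : (a i : ZMod N) ∉ S := by
      have := hXsub i.2
      simpa [Finset.mem_compl] using this
    have hdfz : dft N f (a i) = 0 := by
      by_contra hne
      exact hiS (Finset.mem_filter.2 ⟨Finset.mem_univ _, hne⟩)
    have hsqrt : (1 / (Real.sqrt N) : ℂ) ≠ 0 := by
      refine one_div_ne_zero ?_
      rw [Ne, Complex.ofReal_eq_zero]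
      exact Real.sqrt_ne_zero'.2 (by exact_mod_cast Nat.pos_of_ne_zero (NeZero.ne N))
    have hsum0 : ∑ u : ZMod N,
        f u * Complex.exp (-(2 * Real.pi * Complex.I * ((a i).val : ℂ) * (u.val : ℂ)) / N)
          = 0 := by
      have := hdfz
      rw [dft] at this
      exact (mul_eq_zero.1 this).resolve_left hsqrt
    have step1 : Mc.mulVec v i
        = ∑ u ∈ T, f u * ζ ^ ((a i).val * u.val) := by
      rw [Matrix.mulVec, dotProduct]
      have h1 : ∀ j : Xs, Mc i j * v j = f ↑(e j) * ζ ^ ((a i).val * (↑(e j) : ZMod N).val) := by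
        intro j
        rw [hMc, hv, hb]
        simp [mul_comm]
      rw [Finset.sum_congr rfl fun j _ => h1 j]
      rw [show (∑ j : Xs, f ↑(e j) * ζ ^ ((a i).val * (↑(e j) : ZMod N).val))
          = ∑ u : T, f ↑u * ζ ^ ((a i).val * (↑u : ZMod N).val) from
        Equiv.sum_comp e (fun u : T => f ↑u * ζ ^ ((a i).val * (↑u : ZMod N).val))]
      exact Finset.sum_coe_sort T (fun u => f u * ζ ^ ((a i).val * u.val))
    have step2 : (∑ u ∈ T, f u * ζ ^ ((a i).val * u.val))
        = ∑ u : ZMod N, f u * ζ ^ ((a i).val * u.val) := by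
      refine Finset.sum_subset (Finset.subset_univ T) ?_
      intro x _ hx
      have : f x = 0 := by
        by_contra hne
        exact hx (Finset.mem_filter.2 ⟨Finset.mem_univ _, hne⟩)
      rw [this, zero_mul]
    have step3 : (∑ u : ZMod N, f u * ζ ^ ((a i).val * u.val)) = 0 := by
      rw [← hsum0]
      refine Finset.sum_congr rfl fun u _ => ?_
      rw [hexp]
    rw [Pi.zero_apply, step1, step2, step3]
  have hdetC : Mc.det = 0 := Matrix.exists_mulVec_eq_zero_iff.1 ⟨v, hvne, hker⟩
  -- transfer to the subring
  set Mr : Matrix Xs Xs (Rsub ζ) := Matrix.of fun i j => (zr ζ) ^ ((a i).val * (b j).val)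
    with hMr
  have hmap : (algebraMap (Rsub ζ) ℂ).mapMatrix Mr = Mc := by
    ext i j
    simp only [RingHom.mapMatrix_apply, Matrix.map_apply, hMr, hMc, Matrix.of_apply, map_pow]
    rfl
  have hdetR : Mr.det = 0 := by
    have h1 : (algebraMap (Rsub ζ) ℂ) Mr.det = 0 := by
      rw [RingHom.map_det, hmap, hdetC]
    exact Subtype.coe_injective h1
  -- contradiction with Chebotarev
  haveI : IsNoetherianRing (Rsub ζ) :=
    isNoetherianRing_of_fg (Subalgebra.fg_def.2 ⟨{ζ}, Set.finite_singleton _, rfl⟩)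
  have hzinj : ∀ i j : ℕ, i < N → j < N → (zr ζ) ^ i = (zr ζ) ^ j → i = j := by
    intro i j hi hj h
    refine hζ.pow_inj hi hj ?_
    have := congrArg Subtype.val h
    push_cast [zr_coe] at this
    exact this
  have hzne : (1 : Rsub ζ) - zr ζ ≠ 0 := by
    intro h
    have h1 : (zr ζ) = 1 := by linear_combination -h
    exact hζ.ne_one hN.one_lt (by simpa [zr_coe] using congrArg Subtype.val h1)
  exact cheb_det hN (zr ζ) hzinj (pi_dvd_p hN hζ) (pi_not_unit hN hζ) hzne a b hainj hbinj hdetR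
end

section
/- If N is prime, then any minor of the N×N discrete Fourier transform matrix is nonzero; i.e., for any subsets T, Ω of ZMod N with |T| = |Ω|, the submatrix (e^{-2πiωt/N})_{ω∈Ω, t∈T} is invertible. -/
/-!
The generalized Vandermonde determinant `det (x_a ^ t_b)` over `ℤ` vanishes when two variables
coincide, so it equals the Vandermonde determinant `V(x)` times a polynomial `S`.
Substituting `x_a = X ^ a` in `ℤ[X]`, cancelling the common power of `X - 1` and setting `X = 1`
gives `V(t) = V(0, …, n - 1) * S(1, …, 1)`; as the `t_b` are distinct mod `p`, `p ∤ S(1, …, 1)`.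
Substituting `x_a = ζ ^ ω_a` instead writes the minor as `V(ζ ^ ω) * q(ζ)` with
`q = S(X ^ ω_a) ∈ ℤ[X]`. Here `V(ζ ^ ω) ≠ 0`, and `q(ζ) = 0` would make the cyclotomic polynomial
`Φ_p` divide `q`, whence `p = Φ_p(1) ∣ q(1) = S(1, …, 1)`.
-/

open Finset Matrix
open scoped Polynomial

namespace Chebotarev

theorem prod_dvd_of_prime_of_pairwise_not_dvd {M ι : Type*} [CommMonoidWithZero M]
    [IsCancelMulZero M] {s : Finset ι} {f : ι → M} {z : M} (hp : ∀ i ∈ s, Prime (f i))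
    (hs : (s : Set ι).Pairwise fun i j => ¬ f i ∣ f j) (hz : ∀ i ∈ s, f i ∣ z) :
    ∏ i ∈ s, f i ∣ z := by
  classical
  induction s using Finset.induction_on generalizing z with
  | empty => simp
  | @insert a s ha ih =>
    obtain ⟨m, rfl⟩ := hz a (mem_insert_self a s)
    rw [prod_insert ha]
    refine mul_dvd_mul_left _ (ih (fun i hi => hp i (mem_insert_of_mem hi))
      (hs.mono (by simp)) fun i hi => ?_)
    refine ((hp i (mem_insert_of_mem hi)).dvd_or_dvd (hz i (mem_insert_of_mem hi))).resolve_left ?_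
    exact hs (by simp [hi]) (by simp) (by rintro rfl; exact ha hi)

section Vandermonde

open MvPolynomial

variable {R : Type*} [CommRing R] {n : ℕ}

theorem X_sub_X_dvd_sub_rename_update (i j : Fin n) (g : MvPolynomial (Fin n) R) :
    X j - X i ∣ g - rename (Function.update id j i) g := by
  let I := Ideal.span {(X j - X i : MvPolynomial (Fin n) R)}
  have h : (Ideal.Quotient.mkₐ R I).comp (rename (Function.update id j i)) =
      Ideal.Quotient.mkₐ R I := by
    refine algHom_ext fun k => ?_
    rcases eq_or_ne k j with rfl | hk
    · simpa using (Ideal.Quotient.eq.mpr (Ideal.mem_span_singleton_self _)).symm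
    · simp [Function.update_of_ne hk]
  rw [← Ideal.mem_span_singleton, ← Ideal.Quotient.eq, ← Ideal.Quotient.mkₐ_eq_mk R,
    ← AlgHom.comp_apply, h]

variable [IsDomain R]

theorem prime_X_sub_X {i j : Fin n} (hij : i ≠ j) :
    Prime (X j - X i : MvPolynomial (Fin n) R) := by
  have hker : RingHom.ker (rename (R := R) (Function.update id j i)) =
      Ideal.span {X j - X i} := by
    refine le_antisymm (fun g hg => ?_) ?_
    · simpa [RingHom.mem_ker.mp hg, Ideal.mem_span_singleton] using
        X_sub_X_dvd_sub_rename_update i j g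
    · simp [Ideal.span_le, RingHom.mem_ker, Function.update_of_ne hij]
  rw [← Ideal.span_singleton_prime (sub_ne_zero.mpr (X_injective.ne hij.symm)), ← hker]
  exact RingHom.ker_isPrime _

theorem not_X_sub_X_dvd {i j k l : Fin n} (hij : i < j) (hkl : k < l) (hne : (i, j) ≠ (k, l)) :
    ¬ (X j - X i : MvPolynomial (Fin n) R) ∣ X l - X k := by
  rintro ⟨c, hc⟩
  have h := congrArg (rename (R := R) (Function.update id j i)) hc
  simp only [map_sub, rename_X, map_mul, Function.update_self, Function.update_of_ne hij.ne,
    id, sub_self, zero_mul, sub_eq_zero] at h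
  have h := X_injective h
  simp only [Function.update_apply] at h
  grind

theorem det_vandermonde_X_dvd_of_rename_eq_zero (g : MvPolynomial (Fin n) R)
    (hg : ∀ i j, i ≠ j → rename (Function.update id j i) g = 0) :
    (vandermonde X).det ∣ g := by
  rw [det_vandermonde, prod_sigma']
  refine prod_dvd_of_prime_of_pairwise_not_dvd (fun ⟨i, j⟩ hij => ?_) ?_ fun ⟨i, j⟩ hij => ?_
  · simp only [mem_sigma, mem_univ, mem_Ioi, true_and] at hij
    exact prime_X_sub_X hij.ne
  · rintro ⟨i, j⟩ hij ⟨k, l⟩ hkl hne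
    simp only [coe_sigma, Set.mem_sigma_iff, coe_univ, Set.mem_univ, coe_Ioi, Set.mem_Ioi,
      true_and] at hij hkl
    exact not_X_sub_X_dvd hij hkl (by simpa using hne)
  · simp only [mem_sigma, mem_univ, mem_Ioi, true_and] at hij
    simpa [hg i j hij.ne] using X_sub_X_dvd_sub_rename_update i j g

theorem det_vandermonde_X_dvd_det_X_pow (t : Fin n → ℕ) :
    (vandermonde X).det ∣ (of fun a b => (X a : MvPolynomial (Fin n) R) ^ t b).det := by
  refine det_vandermonde_X_dvd_of_rename_eq_zero _ fun i j hij => ?_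
  rw [AlgHom.map_det]
  refine det_zero_of_row_eq hij (funext fun b => ?_)
  simp [Function.update_of_ne hij]

end Vandermonde

section Specialization

open MvPolynomial

variable {R A : Type*} [CommRing R] [CommRing A] [Algebra R A]

theorem det_pow_eq_det_vandermonde_mul_aeval {t : Fin n → ℕ} {S : MvPolynomial (Fin n) R}
    (hS : (of fun a b => (X a : MvPolynomial (Fin n) R) ^ t b).det = (vandermonde X).det * S)
    (f : Fin n → A) :
    (of fun a b => f a ^ t b).det = (vandermonde f).det * aeval f S := by
  have h := congrArg (aeval f) hS
  rw [map_mul, AlgHom.map_det, AlgHom.map_det] at h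
  convert h using 3 <;> ext <;> simp

theorem aeval_aeval_X_pow (u : Fin n → ℕ) (S : MvPolynomial (Fin n) R) (x : A) :
    Polynomial.aeval x (aeval (fun i => (Polynomial.X : R[X]) ^ u i) S) =
      aeval (fun i => x ^ u i) S := by
  simp only [comp_aeval_apply, map_pow, Polynomial.aeval_X]

theorem eval_one_aeval_X_pow (u : Fin n → ℕ) (S : MvPolynomial (Fin n) R) :
    (aeval (fun i => (Polynomial.X : R[X]) ^ u i) S).eval 1 = eval 1 S := by
  rw [← Polynomial.coe_aeval_eq_eval, aeval_aeval_X_pow, ← coe_aeval_eq_eval]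
  simp only [one_pow]
  rfl

end Specialization

section OneVariable

open Polynomial

variable {R : Type*} [CommRing R]

theorem exists_X_pow_sub_X_pow_eq_mul (a b : ℕ) :
    ∃ q : R[X], X ^ b - X ^ a = (X - 1) * q ∧ q.eval 1 = (b : R) - a :=
  ⟨∑ k ∈ range b, X ^ k - ∑ k ∈ range a, X ^ k, by rw [mul_sub, mul_geom_sum, mul_geom_sum]; ring,
    by simp [eval_finsetSum]⟩

theorem exists_prod_X_pow_sub_X_pow_eq_mul {ι : Type*} (s : Finset ι) (a b : ι → ℕ) :
    ∃ Q : R[X], ∏ k ∈ s, (X ^ b k - X ^ a k) = (X - 1) ^ #s * Q ∧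
      Q.eval 1 = ∏ k ∈ s, ((b k : R) - a k) := by
  choose q hq using fun k => exists_X_pow_sub_X_pow_eq_mul (R := R) (a k) (b k)
  refine ⟨∏ k ∈ s, q k, ?_, ?_⟩
  · rw [← prod_const, ← prod_mul_distrib]
    exact prod_congr rfl fun k _ => (hq k).1
  · rw [eval_prod]
    exact prod_congr rfl fun k _ => (hq k).2

theorem exists_det_vandermonde_X_pow_eq_mul (t : Fin n → ℕ) :
    ∃ Q : R[X], (vandermonde fun i => (X : R[X]) ^ t i).det =
      (X - 1) ^ #(univ.sigma fun i : Fin n => Ioi i) * Q ∧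
      Q.eval 1 = (vandermonde fun i => (t i : R)).det := by
  rw [det_vandermonde, det_vandermonde, prod_sigma', prod_sigma']
  exact exists_prod_X_pow_sub_X_pow_eq_mul (univ.sigma fun i => Ioi i) (fun k => t k.1)
    (fun k => t k.2)

theorem det_vandermonde_natCast_eq_mul_eval_one [IsDomain R] {s t : Fin n → ℕ} {q : R[X]}
    (h : (vandermonde fun i => (X : R[X]) ^ s i).det =
      (vandermonde fun i => (X : R[X]) ^ t i).det * q) :
    (vandermonde fun i => (s i : R)).det = (vandermonde fun i => (t i : R)).det * q.eval 1 := by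
  obtain ⟨Qs, hQs, hs⟩ := exists_det_vandermonde_X_pow_eq_mul (R := R) s
  obtain ⟨Qt, hQt, ht⟩ := exists_det_vandermonde_X_pow_eq_mul (R := R) t
  rw [hQs, hQt, mul_assoc] at h
  rw [← hs, ← ht, ← eval_mul,
    mul_left_cancel₀ (pow_ne_zero _ (by simpa using X_sub_C_ne_zero (1 : R))) h]

end OneVariable

theorem natCast_not_dvd_det_vandermonde {p : ℕ} [Fact p.Prime] {t : Fin n → ℕ}
    (ht : Function.Injective fun i => (t i : ZMod p)) :
    ¬ (p : ℤ) ∣ (vandermonde fun i => (t i : ℤ)).det := by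
  rw [← ZMod.intCast_zmod_eq_zero_iff_dvd, Int.cast_det]
  convert det_vandermonde_ne_zero_iff.mpr ht using 2
  congr 1
  ext i j
  simp [vandermonde_apply]

theorem natCast_not_dvd_eval_one {p : ℕ} [Fact p.Prime] {t : Fin n → ℕ}
    (ht : Function.Injective fun b => (t b : ZMod p)) {S : MvPolynomial (Fin n) ℤ}
    (hS : (of fun a b => (MvPolynomial.X a : MvPolynomial (Fin n) ℤ) ^ t b).det =
      (vandermonde MvPolynomial.X).det * S) :
    ¬ (p : ℤ) ∣ MvPolynomial.eval 1 S := by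
  have h := det_pow_eq_det_vandermonde_mul_aeval hS fun i => (Polynomial.X : ℤ[X]) ^ (i : ℕ)
  have hdet : (of fun a b : Fin n => ((Polynomial.X : ℤ[X]) ^ (a : ℕ)) ^ t b).det =
      (vandermonde fun b => (Polynomial.X : ℤ[X]) ^ t b).det := by
    rw [← det_transpose]
    congr 1
    ext
    simp [vandermonde_apply, pow_right_comm]
  have h1 := det_vandermonde_natCast_eq_mul_eval_one (hdet ▸ h)
  rw [eval_one_aeval_X_pow] at h1
  exact fun hdvd => natCast_not_dvd_det_vandermonde ht (h1 ▸ dvd_mul_of_dvd_right hdvd _)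

theorem natCast_dvd_eval_one_of_aeval_eq_zero {K : Type*} [Field K] [CharZero K] {p : ℕ}
    [Fact p.Prime] {ζ : K} (hζ : IsPrimitiveRoot ζ p) {q : ℤ[X]} (hq : Polynomial.aeval ζ q = 0) :
    (p : ℤ) ∣ q.eval 1 := by
  have hp := (Fact.out : p.Prime).pos
  obtain ⟨r, rfl⟩ : Polynomial.cyclotomic p ℤ ∣ q :=
    Polynomial.cyclotomic_eq_minpoly hζ hp ▸ minpoly.isIntegrallyClosed_dvd (hζ.isIntegral hp) hq
  simp [Polynomial.eval_one_cyclotomic_prime]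

theorem det_pow_mul_ne_zero {K : Type*} [Field K] [CharZero K] {p : ℕ} [Fact p.Prime] {ζ : K}
    (hζ : IsPrimitiveRoot ζ p) {ω t : Fin n → ℕ} (hω : Function.Injective fun a => (ω a : ZMod p))
    (ht : Function.Injective fun b => (t b : ZMod p)) :
    (of fun a b => ζ ^ (ω a * t b)).det ≠ 0 := by
  obtain ⟨S, hS⟩ := det_vandermonde_X_dvd_det_X_pow (R := ℤ) t
  have hS1 := natCast_not_dvd_eval_one ht hS
  simp_rw [pow_mul]
  rw [det_pow_eq_det_vandermonde_mul_aeval hS fun a => ζ ^ ω a]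
  refine mul_ne_zero (det_vandermonde_ne_zero_iff.mpr fun a b hab => hω ?_) fun h0 => hS1 ?_
  · rw [ZMod.natCast_eq_natCast_iff, hζ.eq_orderOf]
    exact ((hζ.isOfFinOrder (Fact.out : p.Prime).ne_zero).pow_eq_pow_iff_modEq).mp hab
  · rw [← aeval_aeval_X_pow] at h0
    simpa [eval_one_aeval_X_pow] using natCast_dvd_eval_one_of_aeval_eq_zero hζ h0

theorem bijective_mulVecLin_of_det_submatrix_ne_zero {K ι m n : Type*} [Field K] [Fintype ι]
    [DecidableEq ι] [Fintype m] [Fintype n] (M : Matrix m n K) (e₁ : ι ≃ m) (e₂ : ι ≃ n)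
    (h : (M.submatrix e₁ e₂).det ≠ 0) : Function.Bijective M.mulVecLin := by
  have hu : IsUnit (M.submatrix e₁ e₂) := (isUnit_iff_isUnit_det _).mpr (isUnit_iff_ne_zero.mpr h)
  have hbij : Function.Bijective (M.submatrix e₁ e₂).mulVecLin :=
    ⟨mulVec_injective_iff_isUnit.mpr hu, mulVec_surjective_iff_isUnit.mpr hu⟩
  have hM : M = reindex e₁ e₂ (M.submatrix e₁ e₂) := by ext; simp
  rw [hM, mulVecLin_reindex]
  exact (LinearEquiv.funCongrLeft K K e₁.symm).bijective.comp
    (hbij.comp (LinearEquiv.funCongrLeft K K e₂).bijective)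

end Chebotarev

theorem stmt_4_general (N : ℕ) (hN : N.Prime) (T Ω : Finset (ZMod N))
    (hcard : T.card = Ω.card) :
    Function.Bijective
      (Matrix.mulVecLin
        (Matrix.of (fun (ω : Ω) (t : T) =>
          Complex.exp (-(2 * Real.pi * Complex.I * ((ω : ZMod N).val : ℂ) *
            ((t : ZMod N).val : ℂ)) / N)))) := by
  have : Fact N.Prime := ⟨hN⟩
  have hζ : IsPrimitiveRoot (Complex.exp (2 * Real.pi * Complex.I / N))⁻¹ N :=
    (Complex.isPrimitiveRoot_exp N hN.ne_zero).inv
  let eT : Fin T.card ≃ T := T.equivFin.symm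
  let eΩ : Fin T.card ≃ Ω := (finCongr hcard).trans Ω.equivFin.symm
  have hval {s : Finset (ZMod N)} (e : Fin T.card ≃ s) :
      Function.Injective fun a => (((e a : ZMod N).val : ℕ) : ZMod N) :=
    fun a b h => e.injective (Subtype.val_injective (by simpa using h))
  refine Chebotarev.bijective_mulVecLin_of_det_submatrix_ne_zero _ eΩ eT ?_
  convert Chebotarev.det_pow_mul_ne_zero hζ (hval eΩ) (hval eT) using 3
  ext a b
  rw [submatrix_apply, of_apply, of_apply, ← Complex.exp_neg, ← Complex.exp_nat_mul]
  congr 1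
  push_cast
  ring

/-- Chebotarev's theorem: for `N` prime, every square submatrix
`(e^{-2πiωt/N})_{ω ∈ Ω, t ∈ T}` (with `|T| = |Ω|`) of the DFT matrix is
invertible, stated as bijectivity of the associated linear map. -/
theorem stmt_4 (N : ℕ) (hN : N.Prime) [NeZero N] (T Ω : Finset (ZMod N))
    (hcard : T.card = Ω.card) :
    Function.Bijective
      (Matrix.mulVecLin
        (Matrix.of (fun (ω : Ω) (t : T) =>
          Complex.exp (-(2 * Real.pi * Complex.I * ((ω : ZMod N).val : ℂ) *
            ((t : ZMod N).val : ℂ)) / N)))) :=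
  stmt_4_general N hN T Ω hcard
end

section
/- Let Φ₁, Φ₂ be two orthonormal bases of ℂ^N with mutual incoherence μ = max over basis vectors φ∈Φ₁, ψ∈Φ₂ of |⟨φ,ψ⟩|. If a nonzero f ∈ ℂ^N has representation coefficients α₁ in Φ₁ supported on Γ₁ and coefficients α₂ in Φ₂ supported on Γ₂, then |Γ₁|·|Γ₂| ≥ 1/μ², and consequently |Γ₁| + |Γ₂| ≥ 2/μ. -/
open scoped Classical
open Matrix

/-!
Write `α = Φ₁ᴴ f` and `β = Φ₂ᴴ f`. Then `β = Mᴴ α` with `M = Φ₁ᴴ Φ₂`, whose entries are bounded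
by `μ`, so by Cauchy–Schwarz every `|β k|²` is at most `μ² |Γ₁| ‖α‖²`. Summing over the `|Γ₂|`
nonzero entries of `β` and using Parseval, `‖f‖² = ‖β‖² ≤ μ² |Γ₁| |Γ₂| ‖f‖²`, which gives the
product bound; the sum bound follows by AM–GM.
-/

open Finset

variable {𝕜 : Type*} [RCLike 𝕜] {m n : Type*}

lemma sum_norm_sq_eq_re_star_dotProduct_self [Fintype n] (v : n → 𝕜) :
    ∑ i, ‖v i‖ ^ 2 = RCLike.re (star v ⬝ᵥ v) := by
  simp only [dotProduct, Pi.star_apply, RCLike.star_def, RCLike.conj_mul, map_sum]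
  norm_cast

lemma sum_norm_sq_conjTranspose_mulVec [Fintype n] [DecidableEq n] {A : Matrix n n 𝕜}
    (hA : A ∈ unitaryGroup n 𝕜) (f : n → 𝕜) :
    ∑ j, ‖(Aᴴ *ᵥ f) j‖ ^ 2 = ∑ i, ‖f i‖ ^ 2 := by
  have hAA : A * Aᴴ = 1 := hA.2
  rw [sum_norm_sq_eq_re_star_dotProduct_self, sum_norm_sq_eq_re_star_dotProduct_self,
    star_mulVec, conjTranspose_conjTranspose, dotProduct_mulVec, vecMul_vecMul, hAA, vecMul_one]

lemma conjTranspose_mulVec_eq_conjTranspose_mul_mulVec [Fintype n] [DecidableEq n] {A : Matrix n n 𝕜}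
    (hA : A ∈ unitaryGroup n 𝕜) (B : Matrix n m 𝕜) (f : n → 𝕜) :
    Bᴴ *ᵥ f = (Aᴴ * B)ᴴ *ᵥ (Aᴴ *ᵥ f) := by
  have hAA : A * Aᴴ = 1 := hA.2
  rw [conjTranspose_mul, conjTranspose_conjTranspose, mulVec_mulVec, Matrix.mul_assoc, hAA,
    Matrix.mul_one]

lemma norm_conjTranspose_mulVec_le [Fintype m] {M : Matrix m n 𝕜} {μ : ℝ} (hM : ∀ j k, ‖M j k‖ ≤ μ)
    {α : m → 𝕜} {S : Finset m} (hS : ∀ j ∉ S, α j = 0) (k : n) :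
    ‖(Mᴴ *ᵥ α) k‖ ≤ μ * ∑ j ∈ S, ‖α j‖ := by
  have hsum : (Mᴴ *ᵥ α) k = ∑ j ∈ S, star (M j k) * α j := by
    refine (sum_subset (subset_univ S) fun j _ hj => ?_).symm
    rw [hS j hj, mul_zero]
  calc ‖(Mᴴ *ᵥ α) k‖ ≤ ∑ j ∈ S, ‖star (M j k) * α j‖ := hsum ▸ norm_sum_le _ _
    _ ≤ ∑ j ∈ S, μ * ‖α j‖ := sum_le_sum fun j _ => by
        rw [norm_mul, norm_star]
        exact mul_le_mul_of_nonneg_right (hM j k) (norm_nonneg _)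
    _ = μ * ∑ j ∈ S, ‖α j‖ := (mul_sum _ _ _).symm

lemma norm_sq_conjTranspose_mulVec_le [Fintype m] {M : Matrix m n 𝕜} {μ : ℝ} (hM : ∀ j k, ‖M j k‖ ≤ μ)
    {α : m → 𝕜} {S : Finset m} (hS : ∀ j ∉ S, α j = 0) (k : n) :
    ‖(Mᴴ *ᵥ α) k‖ ^ 2 ≤ μ ^ 2 * #S * ∑ j, ‖α j‖ ^ 2 := by
  have hsupp : ∑ j ∈ S, ‖α j‖ ^ 2 ≤ ∑ j, ‖α j‖ ^ 2 :=
    sum_le_sum_of_subset_of_nonneg (subset_univ S) fun j _ _ => by positivity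
  calc ‖(Mᴴ *ᵥ α) k‖ ^ 2 ≤ (μ * ∑ j ∈ S, ‖α j‖) ^ 2 :=
        pow_le_pow_left₀ (norm_nonneg _) (norm_conjTranspose_mulVec_le hM hS k) 2
    _ = μ ^ 2 * (∑ j ∈ S, ‖α j‖) ^ 2 := by ring
    _ ≤ μ ^ 2 * (#S * ∑ j, ‖α j‖ ^ 2) := by
        gcongr
        exact sq_sum_le_card_mul_sum_sq.trans (by gcongr)
    _ = μ ^ 2 * #S * ∑ j, ‖α j‖ ^ 2 := by ring

lemma sum_norm_sq_le_card_mul [Fintype n] {β : n → 𝕜} {T : Finset n} (hT : ∀ k ∉ T, β k = 0) {c : ℝ}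
    (hc : ∀ k, ‖β k‖ ^ 2 ≤ c) : ∑ k, ‖β k‖ ^ 2 ≤ #T * c := by
  rw [← sum_subset (subset_univ T) fun k _ hk => by rw [hT k hk, norm_zero, sq, mul_zero],
    ← nsmul_eq_mul]
  exact sum_le_card_nsmul T _ c fun k _ => hc k

lemma sum_norm_sq_pos [Fintype n] {f : n → 𝕜} (hf : f ≠ 0) : 0 < ∑ i, ‖f i‖ ^ 2 := by
  obtain ⟨i, hi⟩ := Function.ne_iff.mp hf
  exact sum_pos' (fun j _ => by positivity) ⟨i, mem_univ i, by positivity⟩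

theorem one_le_sq_mul_card_mul_card [Fintype n] [DecidableEq n] {A B : Matrix n n 𝕜}
    (hA : A ∈ unitaryGroup n 𝕜) (hB : B ∈ unitaryGroup n 𝕜) {μ : ℝ}
    (hμ : ∀ j k, ‖(Aᴴ * B) j k‖ ≤ μ) {f : n → 𝕜} (hf : f ≠ 0) {S T : Finset n}
    (hS : ∀ j ∉ S, (Aᴴ *ᵥ f) j = 0) (hT : ∀ k ∉ T, (Bᴴ *ᵥ f) k = 0) :
    1 ≤ μ ^ 2 * (#S * #T) := by
  set E := ∑ i, ‖f i‖ ^ 2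
  have hβ : ∀ k, ‖(Bᴴ *ᵥ f) k‖ ^ 2 ≤ μ ^ 2 * #S * E := fun k => by
    have h := norm_sq_conjTranspose_mulVec_le hμ hS k
    rwa [sum_norm_sq_conjTranspose_mulVec hA,
      ← conjTranspose_mulVec_eq_conjTranspose_mul_mulVec hA] at h
  have hE : E ≤ μ ^ 2 * (#S * #T) * E := by
    calc E = ∑ k, ‖(Bᴴ *ᵥ f) k‖ ^ 2 := (sum_norm_sq_conjTranspose_mulVec hB f).symm
      _ ≤ #T * (μ ^ 2 * #S * E) := sum_norm_sq_le_card_mul hT hβ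
      _ = μ ^ 2 * (#S * #T) * E := by ring
  exact le_of_mul_le_mul_right (by rwa [one_mul]) (sum_norm_sq_pos hf)

lemma two_div_le_add_of_one_le_sq_mul {a b μ : ℝ} (ha : 0 ≤ a) (hb : 0 ≤ b)
    (h : 1 ≤ μ ^ 2 * (a * b)) : 2 / μ ≤ a + b := by
  rcases le_or_gt μ 0 with hμ | hμ
  · exact (div_nonpos_of_nonneg_of_nonpos zero_le_two hμ).trans (add_nonneg ha hb)
  rw [div_le_iff₀ hμ]
  nlinarith [sq_nonneg ((a - b) * μ), mul_nonneg (add_nonneg ha hb) hμ.le]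

/-- Elad–Bruckstein generalized uncertainty principle: if `f ≠ 0` has
coefficient supports `Γ₁, Γ₂` in two orthonormal bases `Φ₁, Φ₂` of `ℂ^N` with
mutual incoherence `μ`, then `|Γ₁|·|Γ₂| ≥ 1/μ²` and `|Γ₁| + |Γ₂| ≥ 2/μ`. -/
theorem stmt_5 (N : ℕ) (Φ₁ Φ₂ : Matrix (Fin N) (Fin N) ℂ)
    (h₁ : Φ₁ ∈ Matrix.unitaryGroup (Fin N) ℂ)
    (h₂ : Φ₂ ∈ Matrix.unitaryGroup (Fin N) ℂ)
    (μ : ℝ)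
    (hμ : IsGreatest {x : ℝ | ∃ j k, x = ‖(Φ₁ᴴ * Φ₂) j k‖} μ)
    (f : Fin N → ℂ) (hf : f ≠ 0)
    (Γ₁ Γ₂ : Finset (Fin N))
    (hΓ₁ : Γ₁ = Finset.univ.filter (fun j => (Φ₁ᴴ *ᵥ f) j ≠ 0))
    (hΓ₂ : Γ₂ = Finset.univ.filter (fun k => (Φ₂ᴴ *ᵥ f) k ≠ 0)) :
    1 / μ ^ 2 ≤ (Γ₁.card : ℝ) * Γ₂.card ∧ 2 / μ ≤ (Γ₁.card : ℝ) + Γ₂.card := by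
  have hS : ∀ j ∉ Γ₁, (Φ₁ᴴ *ᵥ f) j = 0 := by simp [hΓ₁]
  have hT : ∀ k ∉ Γ₂, (Φ₂ᴴ *ᵥ f) k = 0 := by simp [hΓ₂]
  have key := one_le_sq_mul_card_mul_card h₁ h₂ (fun j k => hμ.2 ⟨j, k, rfl⟩) hf hS hT
  exact ⟨div_le_of_le_mul₀ (sq_nonneg μ) (by positivity) (by linarith),
    two_div_le_add_of_one_le_sq_mul (Nat.cast_nonneg _) (Nat.cast_nonneg _) key⟩
end

section
/- Suppose α ∈ ℂ^{2N} is supported on Γ, f = Φα for a dictionary Φ ∈ ℂ^{N×2N}, the restricted matrix Φ_Γ (columns of Φ indexed by Γ) has full column rank, and there exists a dual vector S ∈ ℂ^N with (Φ*S)(γ) = sgn(α)(γ) for γ ∈ Γ and |(Φ*S)(γ)| < 1 for γ ∉ Γ. Then α is the unique minimizer of ‖β‖₁ subject to Φβ = f. -/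
/-!
The dual vector `v = Φᴴ S` certifies optimality. For every `β` with `Φ β = Φ α`,
`Re ⟨v, β⟩ = Re ⟨S, Φ β⟩ = Re ⟨v, α⟩ = ‖α‖₁`, while `Re ⟨v, β⟩ ≤ ∑ |v γ| |β γ| ≤ ‖β‖₁`
because `|v| ≤ 1`. If `‖β‖₁ ≤ ‖α‖₁`, all of these are equalities, so `β` vanishes where
`|v| < 1`, that is off `Γ`; then `Φ_Γ (β - α) = 0`, and full column rank gives `β = α`.
-/

open scoped Classical
open Matrix Finset

variable {𝕜 ι m : Type*} [RCLike 𝕜] [Fintype ι]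

lemma re_star_dotProduct_le_sum_norm_mul (v β : ι → 𝕜) :
    RCLike.re (star v ⬝ᵥ β) ≤ ∑ i, ‖v i‖ * ‖β i‖ := by
  rw [dotProduct, map_sum]
  refine sum_le_sum fun i _ => (RCLike.re_le_norm _).trans_eq ?_
  rw [norm_mul, Pi.star_apply, norm_star]

lemma re_star_dotProduct_eq_sum_norm_of_sign {v α : ι → 𝕜}
    (hv : ∀ i, α i ≠ 0 → v i = α i / (‖α i‖ : 𝕜)) :
    RCLike.re (star v ⬝ᵥ α) = ∑ i, ‖α i‖ := by
  rw [dotProduct, map_sum]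
  refine sum_congr rfl fun i _ => ?_
  rcases eq_or_ne (α i) 0 with h0 | h0
  · simp [h0]
  · have hn : (‖α i‖ : 𝕜) ≠ 0 := by simpa using h0
    rw [Pi.star_apply, hv i h0, star_div₀, div_mul_eq_mul_div, RCLike.star_def, RCLike.conj_mul,
      RCLike.conj_ofReal, sq, mul_div_cancel_right₀ _ hn, RCLike.ofReal_re]

lemma star_conjTranspose_mulVec_dotProduct [Fintype m] (Φ : Matrix m ι 𝕜) (S : m → 𝕜)
    (β : ι → 𝕜) :
    star (Φᴴ *ᵥ S) ⬝ᵥ β = star S ⬝ᵥ (Φ *ᵥ β) := by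
  rw [star_mulVec, conjTranspose_conjTranspose, dotProduct_mulVec]

lemma eq_zero_of_sum_norm_le_sum_norm_mul {v β : ι → 𝕜} {Γ : Finset ι}
    (hv : ∀ i, ‖v i‖ ≤ 1) (hvΓ : ∀ i ∉ Γ, ‖v i‖ < 1)
    (h : ∑ i, ‖β i‖ ≤ ∑ i, ‖v i‖ * ‖β i‖) : ∀ i ∉ Γ, β i = 0 := by
  intro i₀ hi₀
  by_contra hβ
  have : ∑ i, ‖v i‖ * ‖β i‖ < ∑ i, ‖β i‖ :=
    sum_lt_sum (fun i _ => mul_le_of_le_one_left (norm_nonneg _) (hv i))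
      ⟨i₀, mem_univ _, mul_lt_of_lt_one_left (norm_pos_iff.mpr hβ) (hvΓ i₀ hi₀)⟩
  exact this.not_ge h

lemma eq_of_mulVec_eq_of_linearIndependent {Φ : Matrix m ι 𝕜} {Γ : Finset ι}
    (hΦ : LinearIndependent 𝕜 (fun γ : Γ => fun i => Φ i γ)) {α β : ι → 𝕜}
    (hα : ∀ γ ∉ Γ, α γ = 0) (hβ : ∀ γ ∉ Γ, β γ = 0) (h : Φ *ᵥ β = Φ *ᵥ α) : β = α := by
  set d := β - α
  have hd : ∀ γ ∉ Γ, d γ = 0 := fun γ hγ => by simp [d, hα γ hγ, hβ γ hγ]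
  have hcomb : ∑ γ : Γ, d γ • (fun i => Φ i γ) = 0 := by
    rw [sum_coe_sort Γ fun γ => d γ • fun i => Φ i γ,
      sum_subset (subset_univ Γ) fun γ _ hγ => by rw [hd γ hγ, zero_smul]]
    ext i
    simpa [d, mulVec, dotProduct, mul_sub, mul_comm] using congrFun (sub_eq_zero.mpr h) i
  have hdΓ := Fintype.linearIndependent_iff.mp hΦ _ hcomb
  refine sub_eq_zero.mp (funext fun γ => ?_)
  by_cases hγ : γ ∈ Γ
  · exact hdΓ ⟨γ, hγ⟩
  · exact hd γ hγ

/-- Strong-duality sufficient condition for exact `ℓ₁` recovery (Basis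
Pursuit): if the restricted dictionary has full column rank and a dual vector
exists, then `α` is the unique `ℓ₁` minimizer among representations of `f`. -/
theorem stmt_12 (N : ℕ) (Φ : Matrix (Fin N) (Fin (2 * N)) ℂ)
    (α : Fin (2 * N) → ℂ) (Γ : Finset (Fin (2 * N)))
    (hsupp : ∀ γ ∉ Γ, α γ = 0)
    (hrank : LinearIndependent ℂ (fun γ : Γ => fun i => Φ i (γ : Fin (2 * N))))
    (S : Fin N → ℂ)
    (hdual₁ : ∀ γ ∈ Γ, (Φᴴ *ᵥ S) γ =
      if α γ = 0 then 0 else α γ / (‖α γ‖ : ℂ))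
    (hdual₂ : ∀ γ ∉ Γ, ‖(Φᴴ *ᵥ S) γ‖ < 1) :
    ∀ β : Fin (2 * N) → ℂ, Φ *ᵥ β = Φ *ᵥ α → β ≠ α →
      ∑ γ, ‖α γ‖ < ∑ γ, ‖β γ‖ := by
  intro β hβ hne
  by_contra! hle
  set v := Φᴴ *ᵥ S
  have hsign : ∀ γ, α γ ≠ 0 → v γ = α γ / (‖α γ‖ : ℂ) := fun γ h0 => by
    rw [hdual₁ γ (not_imp_comm.mp (hsupp γ) h0), if_neg h0]
  have hv : ∀ γ, ‖v γ‖ ≤ 1 := fun γ => by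
    by_cases hγ : γ ∈ Γ
    · rw [hdual₁ γ hγ]; split_ifs <;> simp [div_self_le_one]
    · exact (hdual₂ γ hγ).le
  have hnorm : ∑ γ, ‖β γ‖ ≤ ∑ γ, ‖v γ‖ * ‖β γ‖ := calc
    ∑ γ, ‖β γ‖ ≤ ∑ γ, ‖α γ‖ := hle
    _ = RCLike.re (star v ⬝ᵥ α) := (re_star_dotProduct_eq_sum_norm_of_sign hsign).symm
    _ = RCLike.re (star v ⬝ᵥ β) := by
      rw [star_conjTranspose_mulVec_dotProduct, star_conjTranspose_mulVec_dotProduct, hβ]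
    _ ≤ ∑ γ, ‖v γ‖ * ‖β γ‖ := re_star_dotProduct_le_sum_norm_mul v β
  exact hne (eq_of_mulVec_eq_of_linearIndependent hrank hsupp
    (eq_zero_of_sum_norm_le_sum_norm_mul hv hdual₂ hnorm) hβ)
end

section
/- Let |T| be a binomial random variable, the number of successes among N independent Bernoulli(p) trials with E|T| = pN ≥ 4(β+1)log N, and let n ≤ (β+1)log N be a positive integer with λ := n/(pN) ≤ 1/4. Then E[|T|^{n+1}] ≤ 1.15^{n+1} (pN)^{n+1}. -/
/-!
Expand `k ^ m` against falling factorials: `k * (k)_i = (k)_{i+1} + i (k)_i`, so the mixed moments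
`M m i = E[T^m (T)_i]` of `T ~ Bin(N, q)` satisfy `M (m+1) i = M m (i+1) + i M m i`, while
`M 0 i = q^i (N)_i ≤ (qN)^i`. This recursion propagates the bound
`M m i ≤ (qN)^(m+i) exp((m(m-1)/2 + m i)/(qN))`, giving `E[T^(n+1)] ≤ (qN)^(n+1) exp(n(n+1)/(2qN))`,
and `n/(qN) ≤ 1/4` turns the exponential into `exp(1/8)^(n+1) ≤ 1.15^(n+1)`.
-/

open Finset Real

namespace Nat

theorem self_mul_descFactorial (k i : ℕ) :
    k * k.descFactorial i = k.descFactorial (i + 1) + i * k.descFactorial i := by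
  rcases le_or_gt i k with h | h
  · rw [descFactorial_succ, ← Nat.add_mul, Nat.sub_add_cancel h]
  · simp [descFactorial_eq_zero_iff_lt.2 h]

theorem choose_mul_descFactorial {N k i : ℕ} (hik : i ≤ k) :
    N.choose k * k.descFactorial i = N.descFactorial i * (N - i).choose (k - i) := by
  rw [descFactorial_eq_factorial_mul_choose k, descFactorial_eq_factorial_mul_choose N,
    Nat.mul_left_comm, choose_mul hik, Nat.mul_assoc]

end Nat

noncomputable def binomialExpect (N : ℕ) (q : ℝ) (f : ℕ → ℝ) : ℝ :=
  ∑ k ∈ range (N + 1), N.choose k * q ^ k * (1 - q) ^ (N - k) * f k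

theorem PMF.sum_binomial_toReal_mul (p : NNReal) (h : p ≤ 1) (N : ℕ) (f : ℕ → ℝ) :
    ∑ k : Fin (N + 1), (PMF.binomial p h N k).toReal * f k = binomialExpect N p f := by
  rw [binomialExpect, ← Fin.sum_univ_eq_sum_range]
  refine sum_congr rfl fun k _ => ?_
  rw [PMF.binomial_apply]
  simp only [ENNReal.toReal_mul, ENNReal.toReal_pow, ENNReal.coe_toReal, ENNReal.toReal_natCast,
    ENNReal.toReal_sub_of_le (ENNReal.coe_le_one_iff.2 h) ENNReal.one_ne_top, ENNReal.toReal_one,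
    Fin.val_last]
  ring

theorem binomialExpect_descFactorial (N i : ℕ) (q : ℝ) :
    binomialExpect N q (fun k => k.descFactorial i) = q ^ i * N.descFactorial i := by
  rcases le_or_gt i N with hiN | hNi
  · obtain ⟨r, rfl⟩ := Nat.exists_eq_add_of_le hiN
    have hlow : ∀ k ∈ range i,
        ((i + r).choose k : ℝ) * q ^ k * (1 - q) ^ (i + r - k) * (k.descFactorial i : ℝ) = 0 := by
      intro k hk
      simp [Nat.descFactorial_eq_zero_iff_lt.2 (mem_range.1 hk)]
    rw [binomialExpect, show i + r + 1 = i + (r + 1) by ring, sum_range_add, sum_eq_zero hlow,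
      zero_add]
    calc _ = ∑ t ∈ range (r + 1),
          q ^ i * (i + r).descFactorial i * (q ^ t * (1 - q) ^ (r - t) * r.choose t) := by
          refine sum_congr rfl fun t _ => ?_
          have h : ((i + r).choose (i + t) : ℝ) * (i + t).descFactorial i =
              (i + r).descFactorial i * r.choose t := by
            have := Nat.choose_mul_descFactorial (N := i + r) (Nat.le_add_right i t)
            rw [Nat.add_sub_cancel_left, Nat.add_sub_cancel_left] at this
            exact_mod_cast this
          rw [Nat.add_sub_add_left, pow_add]
          linear_combination (q ^ i * q ^ t * (1 - q) ^ (r - t)) * h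
      _ = q ^ i * (i + r).descFactorial i := by
          rw [← mul_sum, ← add_pow]
          simp
  · have hzero : ∀ k ∈ range (N + 1),
        (N.choose k : ℝ) * q ^ k * (1 - q) ^ (N - k) * (k.descFactorial i : ℝ) = 0 := by
      intro k hk
      simp [Nat.descFactorial_eq_zero_iff_lt.2 ((mem_range.1 hk).trans_le hNi)]
    simp [binomialExpect, sum_eq_zero hzero, Nat.descFactorial_eq_zero_iff_lt.2 hNi]

theorem binomialExpect_descFactorial_le {q : ℝ} (hq : 0 ≤ q) (N i : ℕ) :
    binomialExpect N q (fun k => k.descFactorial i) ≤ (q * N) ^ i := by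
  rw [binomialExpect_descFactorial, mul_pow]
  gcongr
  exact_mod_cast N.descFactorial_le_pow i

theorem binomialExpect_pow_succ_mul_descFactorial (N : ℕ) (q : ℝ) (m i : ℕ) :
    binomialExpect N q (fun k => k ^ (m + 1) * k.descFactorial i) =
      binomialExpect N q (fun k => k ^ m * k.descFactorial (i + 1)) +
        i * binomialExpect N q (fun k => k ^ m * k.descFactorial i) := by
  simp only [binomialExpect, mul_sum, ← sum_add_distrib]
  refine sum_congr rfl fun k _ => ?_
  have h : (k : ℝ) * k.descFactorial i = k.descFactorial (i + 1) + i * k.descFactorial i := by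
    exact_mod_cast k.self_mul_descFactorial i
  linear_combination (N.choose k * q ^ k * (1 - q) ^ (N - k) * (k : ℝ) ^ m) * h

theorem mul_exp_div_add_le {a b c : ℝ} (ha : 0 ≤ a) (hb : 0 ≤ b) (hc : 0 < c) :
    c * exp (a / c) + b ≤ c * exp ((a + b) / c) :=
  calc c * exp (a / c) + b ≤ c * exp (a / c) + b * exp (a / c) := by
        gcongr; exact le_mul_of_one_le_right hb (one_le_exp (by positivity))
    _ = c * exp (a / c) * (b / c + 1) := by field_simp; ring
    _ ≤ c * exp (a / c) * exp (b / c) := by gcongr; exact add_one_le_exp _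
    _ = c * exp ((a + b) / c) := by rw [add_div, exp_add, mul_assoc]

theorem pow_mul_exp_step {c : ℝ} (hc : 0 ≤ c) (E : ℝ) (m i : ℕ) :
    c ^ (m + i + 1) * exp ((E + m) / c) + i * (c ^ (m + i) * exp (E / c)) ≤
      c ^ (m + i + 1) * exp ((E + m + i) / c) := by
  rcases hc.eq_or_lt with rfl | hc
  · rcases i with _ | i <;> simp
  have h1 : exp ((E + m) / c) = exp (E / c) * exp (m / c) := by rw [add_div, exp_add]
  have h2 : exp ((E + m + i) / c) = exp (E / c) * exp ((m + i) / c) := by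
    rw [add_assoc, add_div, exp_add]
  rw [h1, h2]
  calc _ = c ^ (m + i) * exp (E / c) * (c * exp (m / c) + i) := by ring
    _ ≤ c ^ (m + i) * exp (E / c) * (c * exp ((m + i) / c)) := by
        gcongr; exact mul_exp_div_add_le m.cast_nonneg i.cast_nonneg hc
    _ = _ := by ring

/-- At `c = 0` the junk value `x / 0 = 0` turns the bound into `M m i ≤ 0 ^ (m + i)`, which the
recursion still respects. -/
theorem le_pow_mul_exp_of_recurrence {c : ℝ} (hc : 0 ≤ c) {M : ℕ → ℕ → ℝ}
    (h0 : ∀ i, M 0 i ≤ c ^ i) (hrec : ∀ m i, M (m + 1) i = M m (i + 1) + i * M m i)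
    (m i : ℕ) : M m i ≤ c ^ (m + i) * exp ((m * (m - 1) / 2 + m * i) / c) := by
  induction m generalizing i with
  | zero => simpa using h0 i
  | succ m ih =>
    set E : ℝ := m * (m - 1) / 2 + m * i
    have hA := ih (i + 1)
    rw [← add_assoc, show (m * (m - 1) / 2 + m * (i + 1 : ℕ) : ℝ) = E + m by push_cast; ring] at hA
    calc M (m + 1) i = M m (i + 1) + i * M m i := hrec m i
      _ ≤ c ^ (m + i + 1) * exp ((E + m) / c) + i * (c ^ (m + i) * exp (E / c)) :=
          add_le_add hA (mul_le_mul_of_nonneg_left (ih i) i.cast_nonneg)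
      _ ≤ c ^ (m + i + 1) * exp ((E + m + i) / c) := pow_mul_exp_step hc E m i
      _ = _ := by
          rw [add_right_comm m 1 i]
          congr 3
          push_cast
          ring

theorem binomialExpect_pow_le {q : ℝ} (hq : 0 ≤ q) (N m : ℕ) :
    binomialExpect N q (fun k => (k : ℝ) ^ m) ≤ (q * N) ^ m * exp (m * (m - 1) / 2 / (q * N)) := by
  have h := le_pow_mul_exp_of_recurrence (c := q * N) (by positivity)
    (M := fun m i => binomialExpect N q (fun k => k ^ m * k.descFactorial i))
    (by simpa using binomialExpect_descFactorial_le hq N)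
    (binomialExpect_pow_succ_mul_descFactorial N q) m 0
  simpa using h

theorem exp_one_div_eight_le : exp (1 / 8) ≤ 1.15 :=
  (exp_bound_div_one_sub_of_interval (by norm_num) (by norm_num)).trans (by norm_num)

theorem stmt_19 (N : ℕ) (p : ENNReal) (hp : p ≤ 1)
    (n : ℕ) (hlam : (n : ℝ) / (p.toReal * N) ≤ 1 / 4) :
    ∑ k : Fin (N + 1), ((PMF.binomial p.toNNReal (by simpa using ENNReal.toNNReal_mono ENNReal.one_ne_top hp) N) k).toReal * ((k : ℕ) : ℝ) ^ (n + 1)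
      ≤ 1.15 ^ (n + 1) * (p.toReal * N) ^ (n + 1) := by
  have hexp : ((n + 1 : ℕ) : ℝ) * ((n + 1 : ℕ) - 1) / 2 / (p.toReal * N) ≤ (n + 1 : ℕ) * (1 / 8) :=
    calc _ = (n + 1 : ℕ) / 2 * (n / (p.toReal * N)) := by push_cast; ring
      _ ≤ (n + 1 : ℕ) / 2 * (1 / 4) := by gcongr
      _ = _ := by ring
  calc _ = binomialExpect N p.toReal (fun k => (k : ℝ) ^ (n + 1)) :=
        PMF.sum_binomial_toReal_mul _ _ N _
    _ ≤ (p.toReal * N) ^ (n + 1) * exp ((n + 1 : ℕ) * ((n + 1 : ℕ) - 1) / 2 / (p.toReal * N)) :=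
        binomialExpect_pow_le ENNReal.toReal_nonneg N (n + 1)
    _ ≤ (p.toReal * N) ^ (n + 1) * exp (1 / 8) ^ (n + 1) := by
        rw [← exp_nat_mul]
        gcongr
    _ ≤ _ := by
        rw [mul_comm]
        gcongr
        exact exp_one_div_eight_le
end
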